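/- Let ρ > 1, μ ∈ (0,1], let I be an open interval containing [p₁,p₂], and p₀ ∈ I∖[p₁,p₂]. Suppose ψ satisfies Assumption (P_{p₀,ρ}) on I and ψ' is monotone on [p₁,p₂], and U satisfies Assumption (A_{p₁,μ}). Then for all ω > 0, |∫_{p₁}^{p₂} U(p) e^{iωψ(p)} dp| ≤ [(2/μ)‖ũ‖_∞ + (4‖ũ‖_∞ + ‖ũ'‖_{L¹})·m^{−1}] · ω^{−μ/ρ}, where m = min_{[p₁,p₂]} |ψ̃|; in particular the bound is uniform with respect to the distance between p₀ and [p₁,p₂]. -/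

import Mathlib

/-!
Put `δ = ω ^ (-1/ρ)` and cut `[p₁, p₂]` into `[p₁, p₁ + δ]`, `[p₁ + δ, p₂ - δ]` and
`[p₂ - δ, p₂]` (or do not cut at all if `p₂ - p₁ ≤ 2δ`). On the outer pieces the trivial bound
`∫ |U| ≤ ‖ũ‖∞ δ^μ / μ` suffices. The middle piece stays at distance `≥ δ` from both `p₁` and
`p₀`, so there `|ψ'| ≥ m δ^(ρ-1)`, while `U = (p - p₁)^(μ-1) ũ` is bounded by `‖ũ‖∞ δ^(μ-1)`
and has variation at most `(‖ũ‖∞ + ‖ũ'‖₁) δ^(μ-1)`, the weight `(p - p₁)^(μ-1)` being monotone.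
Van der Corput's first-derivative estimate (integration by parts against `e^{iωψ} / (iωψ')`,
where `1/ψ'` is monotone of constant sign) bounds that piece by
`(4‖ũ‖∞ + ‖ũ'‖₁) δ^(μ-1) / (ω m δ^(ρ-1)) = (4‖ũ‖∞ + ‖ũ'‖₁) m⁻¹ δ^μ`. Only the distance to `p₀`
enters, which makes the bound uniform in `p₀`.
-/

open MeasureTheory intervalIntegral Set

section Variation

variable {w : ℝ → ℝ} {c d : ℝ}

lemma IsPreconnected.forall_pos_or_forall_neg {s : Set ℝ} {g : ℝ → ℝ} (hs : IsPreconnected s)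
    (hg : ContinuousOn g s) (hg0 : ∀ x ∈ s, g x ≠ 0) :
    (∀ x ∈ s, 0 < g x) ∨ ∀ x ∈ s, g x < 0 := by
  by_contra! h
  obtain ⟨⟨x, hx, hgx⟩, y, hy, hgy⟩ := h
  obtain ⟨z, hz, hgz⟩ := hs.intermediate_value hx hy hg ⟨hgx, hgy⟩
  exact hg0 z hz hgz

lemma monotoneOn_inv_or_antitoneOn_inv {s : Set ℝ} {g : ℝ → ℝ}
    (hsign : (∀ x ∈ s, 0 < g x) ∨ ∀ x ∈ s, g x < 0)
    (hg : MonotoneOn g s ∨ AntitoneOn g s) :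
    MonotoneOn (fun x => (g x)⁻¹) s ∨ AntitoneOn (fun x => (g x)⁻¹) s := by
  rcases hsign with hpos | hneg <;> rcases hg with hmono | hanti
  · exact .inr fun x hx y hy hxy => inv_anti₀ (hpos x hx) (hmono hx hy hxy)
  · exact .inl fun x hx y hy hxy => inv_anti₀ (hpos y hy) (hanti hx hy hxy)
  · exact .inr fun x hx y hy hxy => (inv_le_inv_of_neg (hneg y hy) (hneg x hx)).2 (hmono hx hy hxy)
  · exact .inl fun x hx y hy hxy => (inv_le_inv_of_neg (hneg x hx) (hneg y hy)).2 (hanti hx hy hxy)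

lemma intervalIntegrable_deriv_of_monotoneOn_or_antitoneOn (hcd : c ≤ d)
    (hw : MonotoneOn w (Icc c d) ∨ AntitoneOn w (Icc c d)) :
    IntervalIntegrable (deriv w) volume c d := by
  rw [← uIcc_of_le hcd] at hw
  rcases hw with hmono | hanti
  · exact hmono.intervalIntegrable_deriv
  · have := hanti.neg.intervalIntegrable_deriv
    rw [deriv.fun_neg'] at this
    simpa [Pi.neg_def] using this.neg

lemma integral_abs_deriv_le_of_monotoneOn (hcd : c ≤ d) (hw : MonotoneOn w (Icc c d)) :
    ∫ x in c..d, |deriv w x| ≤ w d - w c := by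
  have hderiv : ∀ x ∈ Ioo c d, |deriv w x| = deriv w x := fun x hx =>
    abs_of_nonneg <| by
      rw [← derivWithin_of_mem_nhds (Icc_mem_nhds hx.1 hx.2)]
      exact hw.derivWithin_nonneg
  have habs : ∫ x in c..d, |deriv w x| = ∫ x in c..d, deriv w x := by
    simp only [integral_of_le hcd, integral_Ioc_eq_integral_Ioo]
    exact setIntegral_congr_fun measurableSet_Ioo hderiv
  rw [← uIcc_of_le hcd] at hw
  have hwcd : w c ≤ w d := hw (by simp) (by simp) hcd
  rw [habs]
  exact (uIcc_of_le (sub_nonneg.2 hwcd) ▸ hw.intervalIntegral_deriv_mem_uIcc).2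

lemma integral_abs_deriv_le_of_monotoneOn_or_antitoneOn (hcd : c ≤ d)
    (hw : MonotoneOn w (Icc c d) ∨ AntitoneOn w (Icc c d)) :
    ∫ x in c..d, |deriv w x| ≤ |w d - w c| := by
  rcases hw with hmono | hanti
  · exact (integral_abs_deriv_le_of_monotoneOn hcd hmono).trans (le_abs_self _)
  · have := integral_abs_deriv_le_of_monotoneOn hcd hanti.neg
    rw [deriv.fun_neg'] at this
    simp only [abs_neg, sub_neg_eq_add, neg_add_eq_sub] at this
    exact this.trans (by rw [abs_sub_comm]; exact le_abs_self _)

end Variation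

lemma norm_cexp_I_mul_ofReal_mul (Ω t : ℝ) : ‖Complex.exp (Complex.I * Ω * t)‖ = 1 := by
  rw [mul_assoc, ← Complex.ofReal_mul]
  exact Complex.norm_exp_I_mul_ofReal _

lemma IntervalIntegrable.ofReal {g : ℝ → ℝ} {a b : ℝ} (h : IntervalIntegrable g volume a b) :
    IntervalIntegrable (fun x => (g x : ℂ)) volume a b :=
  ⟨h.1.ofReal, h.2.ofReal⟩

section ProductAmplitude

variable {w : ℝ → ℝ} {u u' : ℝ → ℂ} {c d B K : ℝ}

lemma intervalIntegrable_deriv_ofReal_mul (hcd : c ≤ d) (hwc : ContinuousOn w (Icc c d))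
    (hw : MonotoneOn w (Icc c d) ∨ AntitoneOn w (Icc c d)) (hu : ContinuousOn u (Icc c d))
    (hu' : IntervalIntegrable u' volume c d) :
    IntervalIntegrable (fun x => ((deriv w x : ℝ) : ℂ) * u x + w x * u' x) volume c d := by
  have hw' := intervalIntegrable_deriv_of_monotoneOn_or_antitoneOn hcd hw
  rw [← uIcc_of_le hcd] at hwc hu
  exact (hw'.ofReal.mul_continuousOn hu).add
    (hu'.continuousOn_mul (Complex.continuous_ofReal.comp_continuousOn hwc))

lemma integral_norm_deriv_ofReal_mul_le (hcd : c ≤ d) (hwc : ContinuousOn w (Icc c d))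
    (hw : MonotoneOn w (Icc c d) ∨ AntitoneOn w (Icc c d))
    (hsign : (∀ x ∈ Icc c d, 0 ≤ w x) ∨ ∀ x ∈ Icc c d, w x ≤ 0)
    (hK : ∀ x ∈ Icc c d, |w x| ≤ K) (hu : ContinuousOn u (Icc c d))
    (hu' : IntervalIntegrable u' volume c d) (hB : ∀ x ∈ Icc c d, ‖u x‖ ≤ B) :
    ∫ x in c..d, ‖((deriv w x : ℝ) : ℂ) * u x + w x * u' x‖ ≤ K * (B + ∫ x in c..d, ‖u' x‖) := by
  have hc : c ∈ Icc c d := ⟨le_rfl, hcd⟩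
  have hd : d ∈ Icc c d := ⟨hcd, le_rfl⟩
  have hB0 : 0 ≤ B := (norm_nonneg _).trans (hB c hc)
  have hjump : |w d - w c| ≤ K := by
    have := abs_le.1 (hK c hc); have := abs_le.1 (hK d hd)
    rcases hsign with hpos | hneg
    · have := hpos c hc; have := hpos d hd
      exact abs_sub_le_iff.2 ⟨by linarith, by linarith⟩
    · have := hneg c hc; have := hneg d hd
      exact abs_sub_le_iff.2 ⟨by linarith, by linarith⟩
  have hw' := intervalIntegrable_deriv_of_monotoneOn_or_antitoneOn hcd hw
  calc ∫ x in c..d, ‖((deriv w x : ℝ) : ℂ) * u x + w x * u' x‖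
      ≤ ∫ x in c..d, (B * |deriv w x| + K * ‖u' x‖) := by
        refine integral_mono_on hcd (intervalIntegrable_deriv_ofReal_mul hcd hwc hw hu hu').norm
          ((hw'.abs.const_mul B).add (hu'.norm.const_mul K)) fun x hx => ?_
        refine (norm_add_le _ _).trans ?_
        simp only [norm_mul, Complex.norm_real, Real.norm_eq_abs]
        rw [mul_comm B]
        gcongr
        exacts [hB x hx, hK x hx]
    _ = B * (∫ x in c..d, |deriv w x|) + K * ∫ x in c..d, ‖u' x‖ := by
        rw [integral_add (hw'.abs.const_mul B) (hu'.norm.const_mul K),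
          intervalIntegral.integral_const_mul, intervalIntegral.integral_const_mul]
    _ ≤ B * K + K * ∫ x in c..d, ‖u' x‖ := by
        gcongr
        exact (integral_abs_deriv_le_of_monotoneOn_or_antitoneOn hcd hw).trans hjump
    _ = K * (B + ∫ x in c..d, ‖u' x‖) := by ring

end ProductAmplitude

lemma norm_cexp_I_mul_ofReal_mul_mul_inv {Ω : ℝ} (hΩ : 0 < Ω) (t : ℝ) :
    ‖Complex.exp (Complex.I * Ω * t) * (Complex.I * Ω)⁻¹‖ = Ω⁻¹ := by
  rw [norm_mul, norm_cexp_I_mul_ofReal_mul, norm_inv, norm_mul, Complex.norm_I,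
    Complex.norm_real, Real.norm_eq_abs, abs_of_pos hΩ, one_mul, one_mul]

lemma HasDerivAt.cexp_I_mul_ofReal_mul_mul_inv {φ : ℝ → ℝ} {φ' Ω x : ℝ} (hΩ : Ω ≠ 0)
    (hφ : HasDerivAt φ φ' x) :
    HasDerivAt (fun y => Complex.exp (Complex.I * Ω * φ y) * (Complex.I * Ω)⁻¹)
      (Complex.exp (Complex.I * Ω * φ x) * φ') x := by
  have hΩ0 : (Ω : ℂ) ≠ 0 := by exact_mod_cast hΩ
  exact ((hφ.ofReal_comp.const_mul (Complex.I * Ω)).cexp.mul_const _).congr_deriv (by field_simp)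

lemma norm_integral_mul_cexp_le_of_mul_deriv_eq_one {φ φ' r : ℝ → ℝ} {f f' : ℝ → ℂ}
    {c d Ω K B : ℝ} (hcd : c ≤ d) (hΩ : 0 < Ω)
    (hφ : ∀ x ∈ Icc c d, HasDerivAt φ (φ' x) x) (hφ'c : ContinuousOn φ' (Icc c d))
    (hrc : ContinuousOn r (Icc c d)) (hrd : ∀ x ∈ Ioo c d, DifferentiableAt ℝ r x)
    (hrmono : MonotoneOn r (Icc c d) ∨ AntitoneOn r (Icc c d))
    (hrsign : (∀ x ∈ Icc c d, 0 ≤ r x) ∨ ∀ x ∈ Icc c d, r x ≤ 0)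
    (hrK : ∀ x ∈ Icc c d, |r x| ≤ K) (hrφ' : ∀ x ∈ Icc c d, r x * φ' x = 1)
    (hf : ContinuousOn f (Icc c d)) (hf' : ∀ x ∈ Ioo c d, HasDerivAt f (f' x) x)
    (hf'int : IntervalIntegrable f' volume c d) (hB : ∀ x ∈ Icc c d, ‖f x‖ ≤ B) :
    ‖∫ x in c..d, f x * Complex.exp (Complex.I * Ω * φ x)‖ ≤
      K * (3 * B + ∫ x in c..d, ‖f' x‖) / Ω := by
  have hφc : ContinuousOn φ (Icc c d) := fun x hx => (hφ x hx).continuousAt.continuousWithinAt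
  have hK0 : 0 ≤ K := (abs_nonneg _).trans (hrK c ⟨le_rfl, hcd⟩)
  set v : ℝ → ℂ := fun x => Complex.exp (Complex.I * Ω * φ x) * (Complex.I * Ω)⁻¹
  set u' : ℝ → ℂ := fun x => ((deriv r x : ℝ) : ℂ) * f x + r x * f' x
  have hv x (hx : x ∈ Icc c d) := (hφ x hx).cexp_I_mul_ofReal_mul_mul_inv hΩ.ne'
  have hIBP := integral_mul_deriv_eq_deriv_mul_of_hasDerivAt (u := fun y => (r y : ℂ) * f y)
    (u' := u') (v := v) (v' := fun x => Complex.exp (Complex.I * Ω * φ x) * φ' x)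
    (by rw [uIcc_of_le hcd]; exact (Complex.continuous_ofReal.comp_continuousOn hrc).mul hf)
    (fun x hx => (hv x (uIcc_of_le hcd ▸ hx)).continuousAt.continuousWithinAt)
    (by rw [min_eq_left hcd, max_eq_right hcd]
        exact fun x hx => (hrd x hx).hasDerivAt.ofReal_comp.mul (hf' x hx))
    (by rw [min_eq_left hcd, max_eq_right hcd]; exact fun x hx => hv x (Ioo_subset_Icc_self hx))
    (intervalIntegrable_deriv_ofReal_mul hcd hrc hrmono hf hf'int)
    (ContinuousOn.intervalIntegrable (by rw [uIcc_of_le hcd]; fun_prop))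
  have hend : ∀ x ∈ Icc c d, ‖(r x : ℂ) * f x * v x‖ ≤ K * B * Ω⁻¹ := fun x hx => by
    rw [norm_mul, norm_mul, norm_cexp_I_mul_ofReal_mul_mul_inv hΩ, Complex.norm_real,
      Real.norm_eq_abs]
    exact mul_le_mul_of_nonneg_right (mul_le_mul (hrK x hx) (hB x hx) (norm_nonneg _) hK0)
      (by positivity)
  have hrest : ‖∫ x in c..d, u' x * v x‖ ≤ K * (B + ∫ x in c..d, ‖f' x‖) * Ω⁻¹ :=
    calc _ ≤ ∫ x in c..d, ‖u' x * v x‖ := norm_integral_le_integral_norm hcd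
      _ = (∫ x in c..d, ‖u' x‖) * Ω⁻¹ := by
          simp only [v, norm_mul _ (Complex.exp _ * _), norm_cexp_I_mul_ofReal_mul_mul_inv hΩ,
            intervalIntegral.integral_mul_const]
      _ ≤ K * (B + ∫ x in c..d, ‖f' x‖) * Ω⁻¹ := by
          gcongr
          exact integral_norm_deriv_ofReal_mul_le hcd hrc hrmono hrsign hrK hf hf'int hB
  have hfv : ∫ x in c..d, f x * Complex.exp (Complex.I * Ω * φ x) =
      ∫ x in c..d, (r x : ℂ) * f x * (Complex.exp (Complex.I * Ω * φ x) * φ' x) :=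
    integral_congr fun x hx => by
      have h : (r x : ℂ) * φ' x = 1 := by exact_mod_cast hrφ' x (uIcc_of_le hcd ▸ hx)
      linear_combination (-(f x * Complex.exp (Complex.I * Ω * φ x))) * h
  rw [hfv, hIBP]
  calc _ ≤ K * B * Ω⁻¹ + K * B * Ω⁻¹ + K * (B + ∫ x in c..d, ‖f' x‖) * Ω⁻¹ :=
        (norm_sub_le _ _).trans (add_le_add ((norm_sub_le _ _).trans (add_le_add
          (hend d ⟨hcd, le_rfl⟩) (hend c ⟨le_rfl, hcd⟩))) hrest)
    _ = K * (3 * B + ∫ x in c..d, ‖f' x‖) / Ω := by field_simp; ring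

theorem norm_integral_mul_cexp_le_of_monotoneOn_deriv {φ φ' : ℝ → ℝ} {f f' : ℝ → ℂ}
    {c d Ω lam B : ℝ} (hcd : c ≤ d) (hΩ : 0 < Ω) (hlam : 0 < lam)
    (hφ : ∀ x ∈ Icc c d, HasDerivAt φ (φ' x) x) (hφ'c : ContinuousOn φ' (Icc c d))
    (hφ'd : ∀ x ∈ Ioo c d, DifferentiableAt ℝ φ' x)
    (hφ'mono : MonotoneOn φ' (Icc c d) ∨ AntitoneOn φ' (Icc c d))
    (hlow : ∀ x ∈ Icc c d, lam ≤ |φ' x|)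
    (hf : ContinuousOn f (Icc c d)) (hf' : ∀ x ∈ Ioo c d, HasDerivAt f (f' x) x)
    (hf'int : IntervalIntegrable f' volume c d) (hB : ∀ x ∈ Icc c d, ‖f x‖ ≤ B) :
    ‖∫ x in c..d, f x * Complex.exp (Complex.I * Ω * φ x)‖ ≤
      (3 * B + ∫ x in c..d, ‖f' x‖) / (Ω * lam) := by
  have hφ'0 : ∀ x ∈ Icc c d, φ' x ≠ 0 := fun x hx h => by
    have := hlow x hx; rw [h, abs_zero] at this; linarith
  have hsign := isPreconnected_Icc.forall_pos_or_forall_neg hφ'c hφ'0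
  have h := norm_integral_mul_cexp_le_of_mul_deriv_eq_one (r := fun x => (φ' x)⁻¹) (K := lam⁻¹)
    hcd hΩ hφ hφ'c (hφ'c.inv₀ hφ'0)
    (fun x hx => (hφ'd x hx).inv (hφ'0 x (Ioo_subset_Icc_self hx)))
    (monotoneOn_inv_or_antitoneOn_inv hsign hφ'mono)
    (hsign.imp (fun h x hx => (inv_pos.2 (h x hx)).le) fun h x hx => (inv_lt_zero.2 (h x hx)).le)
    (fun x hx => by rw [abs_inv]; exact inv_anti₀ hlam (hlow x hx))
    (fun x hx => inv_mul_cancel₀ (hφ'0 x hx)) hf hf' hf'int hB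
  rwa [inv_mul_eq_div, div_div, mul_comm lam] at h

theorem norm_integral_ofReal_mul_mul_cexp_le {φ φ' w : ℝ → ℝ} {u u' : ℝ → ℂ}
    {c d Ω lam K B : ℝ} (hcd : c ≤ d) (hΩ : 0 < Ω) (hlam : 0 < lam)
    (hφ : ∀ x ∈ Icc c d, HasDerivAt φ (φ' x) x) (hφ'c : ContinuousOn φ' (Icc c d))
    (hφ'd : ∀ x ∈ Ioo c d, DifferentiableAt ℝ φ' x)
    (hφ'mono : MonotoneOn φ' (Icc c d) ∨ AntitoneOn φ' (Icc c d))
    (hlow : ∀ x ∈ Icc c d, lam ≤ |φ' x|)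
    (hwc : ContinuousOn w (Icc c d)) (hwd : ∀ x ∈ Ioo c d, DifferentiableAt ℝ w x)
    (hwmono : MonotoneOn w (Icc c d) ∨ AntitoneOn w (Icc c d))
    (hwsign : (∀ x ∈ Icc c d, 0 ≤ w x) ∨ ∀ x ∈ Icc c d, w x ≤ 0)
    (hwK : ∀ x ∈ Icc c d, |w x| ≤ K)
    (hu : ContinuousOn u (Icc c d)) (hu' : ∀ x ∈ Ioo c d, HasDerivAt u (u' x) x)
    (hu'int : IntervalIntegrable u' volume c d) (hB : ∀ x ∈ Icc c d, ‖u x‖ ≤ B) :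
    ‖∫ x in c..d, (w x : ℂ) * u x * Complex.exp (Complex.I * Ω * φ x)‖ ≤
      K * (4 * B + ∫ x in c..d, ‖u' x‖) / (Ω * lam) := by
  have hwu : ∀ x ∈ Icc c d, ‖(w x : ℂ) * u x‖ ≤ K * B := fun x hx => by
    rw [norm_mul, Complex.norm_real, Real.norm_eq_abs]
    exact mul_le_mul (hwK x hx) (hB x hx) (norm_nonneg _) ((abs_nonneg _).trans (hwK x hx))
  refine (norm_integral_mul_cexp_le_of_monotoneOn_deriv hcd hΩ hlam hφ hφ'c hφ'd hφ'mono hlow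
    ((Complex.continuous_ofReal.comp_continuousOn hwc).mul hu)
    (fun x hx => (hwd x hx).hasDerivAt.ofReal_comp.mul (hu' x hx))
    (intervalIntegrable_deriv_ofReal_mul hcd hwc hwmono hu hu'int) hwu).trans ?_
  have := integral_norm_deriv_ofReal_mul_le hcd hwc hwmono hwsign hwK hu hu'int hB
  gcongr
  linarith

section SingularAmplitude

variable {μ p₁ : ℝ}

lemma intervalIntegrable_rpow_sub (hμ : 0 < μ) (x y : ℝ) :
    IntervalIntegrable (fun p => (p - p₁) ^ (μ - 1)) volume x y := by
  simpa using (intervalIntegrable_rpow' (by linarith : (-1 : ℝ) < μ - 1)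
    (a := x - p₁) (b := y - p₁)).comp_sub_right p₁

lemma integral_rpow_sub (hμ : 0 < μ) (x y : ℝ) :
    ∫ p in x..y, (p - p₁) ^ (μ - 1) = ((y - p₁) ^ μ - (x - p₁) ^ μ) / μ := by
  rw [integral_comp_sub_right (fun t => t ^ (μ - 1)),
    integral_rpow (Or.inl (by linarith : (-1 : ℝ) < μ - 1)), sub_add_cancel]

variable {p₂ x y M Ω : ℝ} {ψ : ℝ → ℝ} {U ut : ℝ → ℂ}

lemma intervalIntegrable_singular_mul_cexp (hμ : 0 < μ)
    (hU : ∀ p ∈ Ioc p₁ p₂, U p = ((p - p₁) ^ (μ - 1) : ℝ) * ut p)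
    (hutc : ContinuousOn ut (Icc p₁ p₂)) (hψc : ContinuousOn ψ (Icc p₁ p₂))
    (hx : p₁ ≤ x) (hxy : x ≤ y) (hy : y ≤ p₂) :
    IntervalIntegrable (fun p => U p * Complex.exp (Complex.I * Ω * ψ p)) volume x y := by
  have hsub : uIcc x y ⊆ Icc p₁ p₂ := uIcc_of_le hxy ▸ Icc_subset_Icc hx hy
  have hψc' := hψc.mono hsub
  refine ((intervalIntegrable_rpow_sub (p₁ := p₁) hμ x y).ofReal.mul_continuousOn
    (g := fun p => ut p * Complex.exp (Complex.I * Ω * ψ p))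
    ((hutc.mono hsub).mul (by fun_prop))).congr ?_
  intro p hp
  rw [uIoc_of_le hxy] at hp
  simp only [hU p ⟨hx.trans_lt hp.1, hp.2.trans hy⟩]
  ring

lemma norm_integral_singular_mul_cexp_le (hμ0 : 0 < μ) (hμ1 : μ ≤ 1)
    (hU : ∀ p ∈ Ioc p₁ p₂, U p = ((p - p₁) ^ (μ - 1) : ℝ) * ut p)
    (hM : ∀ p ∈ Icc p₁ p₂, ‖ut p‖ ≤ M) (hx : p₁ ≤ x) (hxy : x ≤ y) (hy : y ≤ p₂) :
    ‖∫ p in x..y, U p * Complex.exp (Complex.I * Ω * ψ p)‖ ≤ M * (y - x) ^ μ / μ := by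
  have hM0 : 0 ≤ M := (norm_nonneg _).trans (hM p₁ ⟨le_rfl, hx.trans (hxy.trans hy)⟩)
  calc _ ≤ ∫ p in x..y, M * (p - p₁) ^ (μ - 1) := by
        refine norm_integral_le_of_norm_le hxy (ae_of_all _ fun p hp => ?_)
          ((intervalIntegrable_rpow_sub hμ0 x y).const_mul M)
        have hp' : p ∈ Ioc p₁ p₂ := ⟨hx.trans_lt hp.1, hp.2.trans hy⟩
        rw [hU p hp', norm_mul, norm_mul, norm_cexp_I_mul_ofReal_mul, mul_one, Complex.norm_real,
          Real.norm_eq_abs, abs_of_nonneg (Real.rpow_nonneg (sub_nonneg.2 hp'.1.le) _), mul_comm]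
        exact mul_le_mul_of_nonneg_right (hM p (Ioc_subset_Icc_self hp'))
          (Real.rpow_nonneg (sub_nonneg.2 hp'.1.le) _)
    _ = M * ((y - p₁) ^ μ - (x - p₁) ^ μ) / μ := by
        rw [intervalIntegral.integral_const_mul, integral_rpow_sub hμ0, mul_div_assoc]
    _ ≤ M * (y - x) ^ μ / μ := by
        have := Real.rpow_add_le_add_rpow (sub_nonneg.2 hx) (sub_nonneg.2 hxy) hμ0.le hμ1
        rw [sub_add_sub_cancel'] at this
        gcongr
        linarith

theorem norm_integral_rpow_sub_mul_mul_cexp_le {φ φ' : ℝ → ℝ} {u u' : ℝ → ℂ}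
    {δ c d lam B : ℝ} (hμ1 : μ ≤ 1) (hδ : 0 < δ) (hc : p₁ + δ ≤ c) (hcd : c ≤ d) (hΩ : 0 < Ω)
    (hlam : 0 < lam) (hφ : ∀ x ∈ Icc c d, HasDerivAt φ (φ' x) x)
    (hφ'c : ContinuousOn φ' (Icc c d)) (hφ'd : ∀ x ∈ Ioo c d, DifferentiableAt ℝ φ' x)
    (hφ'mono : MonotoneOn φ' (Icc c d) ∨ AntitoneOn φ' (Icc c d))
    (hlow : ∀ x ∈ Icc c d, lam ≤ |φ' x|)
    (hu : ContinuousOn u (Icc c d)) (hu' : ∀ x ∈ Ioo c d, HasDerivAt u (u' x) x)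
    (hu'int : IntervalIntegrable u' volume c d) (hB : ∀ x ∈ Icc c d, ‖u x‖ ≤ B) :
    ‖∫ x in c..d, (((x - p₁) ^ (μ - 1) : ℝ) : ℂ) * u x * Complex.exp (Complex.I * Ω * φ x)‖ ≤
      δ ^ (μ - 1) * (4 * B + ∫ x in c..d, ‖u' x‖) / (Ω * lam) := by
  have hbase : ∀ x ∈ Icc c d, δ ≤ x - p₁ := fun x hx => by linarith [hx.1]
  refine norm_integral_ofReal_mul_mul_cexp_le hcd hΩ hlam hφ hφ'c hφ'd hφ'mono hlow
    ((continuousOn_id.sub continuousOn_const).rpow_const fun x hx =>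
      .inl (hδ.trans_le (hbase x hx)).ne')
    (fun x hx => ((differentiableAt_id.sub_const p₁).rpow_const
      (.inl (hδ.trans_le (hbase x (Ioo_subset_Icc_self hx))).ne')))
    (.inr fun x hx y _ hxy => Real.rpow_le_rpow_of_nonpos (hδ.trans_le (hbase x hx))
      (sub_le_sub_right hxy p₁) (by linarith))
    (.inl fun x hx => Real.rpow_nonneg (hδ.le.trans (hbase x hx)) _)
    (fun x hx => ?_) hu hu' hu'int hB
  rw [abs_of_nonneg (Real.rpow_nonneg (hδ.le.trans (hbase x hx)) _)]
  exact Real.rpow_le_rpow_of_nonpos hδ (hbase x hx) (by linarith)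

end SingularAmplitude

theorem norm_integral_singular_mul_cexp_le_of_le_dist {ρ μ a b p₁ p₂ p₀ M m δ c d Ω : ℝ}
    {ψ ψt : ℝ → ℝ} {U ut : ℝ → ℂ} (hρ : 1 < ρ) (hμ1 : μ ≤ 1)
    (hI : Icc p₁ p₂ ⊆ Ioo a b) (hψ1 : ContDiffOn ℝ 1 ψ (Ioo a b))
    (hψ2 : ContDiffOn ℝ 2 ψ (Ioo a b \ {p₀}))
    (hfact : ∀ p ∈ Ioo a b, deriv ψ p = |p - p₀| ^ (ρ - 1) * ψt p)
    (hmono : MonotoneOn (deriv ψ) (Icc p₁ p₂) ∨ AntitoneOn (deriv ψ) (Icc p₁ p₂))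
    (hm : ∀ p ∈ Icc p₁ p₂, m ≤ |ψt p|) (hm0 : 0 < m)
    (hU : ∀ p ∈ Ioc p₁ p₂, U p = ((p - p₁) ^ (μ - 1) : ℝ) * ut p)
    (hutc : ContinuousOn ut (Icc p₁ p₂)) (hutd : ∀ p ∈ Ioo p₁ p₂, DifferentiableAt ℝ ut p)
    (hutint : IntervalIntegrable (deriv ut) volume p₁ p₂) (hM : ∀ p ∈ Icc p₁ p₂, ‖ut p‖ ≤ M)
    (hδ : 0 < δ) (hc : p₁ + δ ≤ c) (hcd : c ≤ d) (hd : d ≤ p₂)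
    (hdist : ∀ p ∈ Icc c d, δ ≤ |p - p₀|) (hΩ : 0 < Ω) :
    ‖∫ p in c..d, U p * Complex.exp (Complex.I * Ω * ψ p)‖ ≤
      δ ^ (μ - 1) * (4 * M + ∫ p in p₁..p₂, ‖deriv ut p‖) / (Ω * (m * δ ^ (ρ - 1))) := by
  have hsub : Icc c d ⊆ Icc p₁ p₂ := Icc_subset_Icc (by linarith) hd
  have hab : Icc c d ⊆ Ioo a b := hsub.trans hI
  have hopen : IsOpen (Ioo a b \ {p₀}) := isOpen_Ioo.sdiff isClosed_singleton
  have hsub₀ : Icc c d ⊆ Ioo a b \ {p₀} := fun p hp => ⟨hab hp, fun h => by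
    have := hdist p hp
    rw [mem_singleton_iff.1 h, sub_self, abs_zero] at this
    linarith⟩
  have hlow : ∀ p ∈ Icc c d, m * δ ^ (ρ - 1) ≤ |deriv ψ p| := fun p hp => by
    rw [hfact p (hab hp), abs_mul, abs_of_nonneg (Real.rpow_nonneg (abs_nonneg _) _), mul_comm m]
    exact mul_le_mul (Real.rpow_le_rpow hδ.le (hdist p hp) (by linarith)) (hm p (hsub hp))
      hm0.le (Real.rpow_nonneg (abs_nonneg _) _)
  have hV : ∫ p in c..d, ‖deriv ut p‖ ≤ ∫ p in p₁..p₂, ‖deriv ut p‖ :=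
    integral_mono_interval (by linarith) hcd hd (ae_of_all _ fun _ => norm_nonneg _) hutint.norm
  have hUeq : ∫ p in c..d, U p * Complex.exp (Complex.I * Ω * ψ p) =
      ∫ p in c..d, (((p - p₁) ^ (μ - 1) : ℝ) : ℂ) * ut p * Complex.exp (Complex.I * Ω * ψ p) :=
    integral_congr fun p hp => by
      rw [uIcc_of_le hcd] at hp
      rw [hU p ⟨by linarith [hp.1], hp.2.trans hd⟩]
  rw [hUeq]
  refine (norm_integral_rpow_sub_mul_mul_cexp_le hμ1 hδ hc hcd hΩ (by positivity)
    (fun p hp => ((hψ1.differentiableOn one_ne_zero).differentiableAt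
      (isOpen_Ioo.mem_nhds (hab hp))).hasDerivAt)
    ((hψ1.continuousOn_deriv_of_isOpen isOpen_Ioo le_rfl).mono hab)
    (fun p hp => ((hψ2.deriv_of_isOpen hopen (by norm_num)).differentiableOn one_ne_zero
      |>.differentiableAt (hopen.mem_nhds (hsub₀ (Ioo_subset_Icc_self hp)))))
    (hmono.imp (·.mono hsub) (·.mono hsub)) hlow (hutc.mono hsub)
    (fun p hp => (hutd p ⟨by linarith [hp.1], hp.2.trans_le hd⟩).hasDerivAt)
    (hutint.mono_set (by rwa [uIcc_of_le hcd, uIcc_of_le (by linarith : p₁ ≤ p₂)]))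
    fun p hp => hM p (hsub hp)).trans ?_
  gcongr

lemma le_abs_sub_of_notMem_Icc {p₁ p₂ p₀ δ p : ℝ} (hδ : 0 ≤ δ) (hp₀ : p₀ ∉ Icc p₁ p₂)
    (hp : p ∈ Icc (p₁ + δ) (p₂ - δ)) : δ ≤ |p - p₀| := by
  rcases not_and_or.1 hp₀ with h | h <;> rw [not_le] at h
  · rw [abs_of_pos (by linarith [hp.1])]; linarith [hp.1]
  · rw [abs_of_neg (by linarith [hp.2])]; linarith [hp.2]

lemma norm_integral_singular_mul_cexp_le_of_sub_le {μ p₁ p₂ M δ Ω : ℝ} {ψ : ℝ → ℝ}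
    {U ut : ℝ → ℂ} (hμ0 : 0 < μ) (hμ1 : μ ≤ 1)
    (hU : ∀ p ∈ Ioc p₁ p₂, U p = ((p - p₁) ^ (μ - 1) : ℝ) * ut p)
    (hM : ∀ p ∈ Icc p₁ p₂, ‖ut p‖ ≤ M) (hp : p₁ ≤ p₂) (hδ : 0 ≤ δ) (hshort : p₂ - p₁ ≤ 2 * δ) :
    ‖∫ p in p₁..p₂, U p * Complex.exp (Complex.I * Ω * ψ p)‖ ≤ 2 / μ * M * δ ^ μ := by
  have hM0 : 0 ≤ M := (norm_nonneg _).trans (hM p₁ ⟨le_rfl, hp⟩)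
  calc _ ≤ M * (p₂ - p₁) ^ μ / μ :=
        norm_integral_singular_mul_cexp_le hμ0 hμ1 hU hM le_rfl hp le_rfl
    _ ≤ M * (2 ^ μ * δ ^ μ) / μ := by
        rw [← Real.mul_rpow zero_le_two hδ]
        gcongr
    _ ≤ M * (2 * δ ^ μ) / μ := by
        gcongr
        simpa using Real.rpow_le_rpow_of_exponent_le one_le_two hμ1
    _ = 2 / μ * M * δ ^ μ := by ring

theorem norm_integral_singular_mul_cexp_le_of_mul_rpow_eq_one {ρ μ a b p₁ p₂ p₀ M m δ Ω : ℝ}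
    {ψ ψt : ℝ → ℝ} {U ut : ℝ → ℂ} (hρ : 1 < ρ) (hμ0 : 0 < μ) (hμ1 : μ ≤ 1)
    (hI : Icc p₁ p₂ ⊆ Ioo a b) (hp : p₁ ≤ p₂) (hp₀ : p₀ ∉ Icc p₁ p₂)
    (hψ1 : ContDiffOn ℝ 1 ψ (Ioo a b)) (hψ2 : ContDiffOn ℝ 2 ψ (Ioo a b \ {p₀}))
    (hfact : ∀ p ∈ Ioo a b, deriv ψ p = |p - p₀| ^ (ρ - 1) * ψt p)
    (hmono : MonotoneOn (deriv ψ) (Icc p₁ p₂) ∨ AntitoneOn (deriv ψ) (Icc p₁ p₂))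
    (hm : ∀ p ∈ Icc p₁ p₂, m ≤ |ψt p|) (hm0 : 0 < m)
    (hU : ∀ p ∈ Ioc p₁ p₂, U p = ((p - p₁) ^ (μ - 1) : ℝ) * ut p)
    (hutc : ContinuousOn ut (Icc p₁ p₂)) (hutd : ∀ p ∈ Ioo p₁ p₂, DifferentiableAt ℝ ut p)
    (hutint : IntervalIntegrable (deriv ut) volume p₁ p₂) (hM : ∀ p ∈ Icc p₁ p₂, ‖ut p‖ ≤ M)
    (hδ : 0 < δ) (hΩ : 0 < Ω) (hΩδ : Ω * δ ^ ρ = 1) :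
    ‖∫ p in p₁..p₂, U p * Complex.exp (Complex.I * Ω * ψ p)‖ ≤
      (2 / μ * M + (4 * M + ∫ p in p₁..p₂, ‖deriv ut p‖) * m⁻¹) * δ ^ μ := by
  set V := ∫ p in p₁..p₂, ‖deriv ut p‖
  have hM0 : 0 ≤ M := (norm_nonneg _).trans (hM p₁ ⟨le_rfl, hp⟩)
  have hV0 : 0 ≤ V := integral_nonneg hp fun _ _ => norm_nonneg _
  by_cases hshort : p₂ - p₁ ≤ 2 * δ
  · have : 0 ≤ (4 * M + V) * m⁻¹ * δ ^ μ := by positivity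
    linarith [norm_integral_singular_mul_cexp_le_of_sub_le (Ω := Ω) (ψ := ψ) hμ0 hμ1 hU hM hp
      hδ.le hshort]
  replace hshort := not_le.1 hshort
  have hint x y (hx : p₁ ≤ x) (hxy : x ≤ y) (hy : y ≤ p₂) :=
    intervalIntegrable_singular_mul_cexp (Ω := Ω) hμ0 hU hutc (hψ1.continuousOn.mono hI) hx hxy hy
  rw [← integral_add_adjacent_intervals (hint p₁ (p₁ + δ) le_rfl (by linarith) (by linarith))
      (hint (p₁ + δ) p₂ (by linarith) (by linarith) le_rfl),
    ← integral_add_adjacent_intervals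
      (hint (p₁ + δ) (p₂ - δ) (by linarith) (by linarith) (by linarith))
      (hint (p₂ - δ) p₂ (by linarith) (by linarith) le_rfl)]
  have h₁ := norm_integral_singular_mul_cexp_le (Ω := Ω) (ψ := ψ) hμ0 hμ1 hU hM le_rfl
    (by linarith : p₁ ≤ p₁ + δ) (by linarith)
  have h₂ := norm_integral_singular_mul_cexp_le_of_le_dist hρ hμ1 hI hψ1 hψ2 hfact hmono hm hm0 hU
    hutc hutd hutint hM hδ le_rfl (by linarith : p₁ + δ ≤ p₂ - δ) (by linarith)
    (fun _ => le_abs_sub_of_notMem_Icc hδ.le hp₀) hΩ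
  have h₃ := norm_integral_singular_mul_cexp_le (Ω := Ω) (ψ := ψ) hμ0 hμ1 hU hM
    (by linarith : p₁ ≤ p₂ - δ) (by linarith) le_rfl
  rw [add_sub_cancel_left] at h₁
  rw [sub_sub_cancel] at h₃
  have hfar : δ ^ (μ - 1) * (4 * M + V) / (Ω * (m * δ ^ (ρ - 1))) =
      (4 * M + V) * m⁻¹ * δ ^ μ := by
    rw [eq_inv_of_mul_eq_one_left hΩδ, Real.rpow_sub_one hδ.ne', Real.rpow_sub_one hδ.ne']
    field_simp
  refine (norm_add_le _ _).trans <|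
    (add_le_add h₁ ((norm_add_le _ _).trans (add_le_add h₂ h₃))).trans_eq ?_
  rw [hfar]
  ring

lemma norm_le_ciSup_of_continuousOn {E : Type*} [NormedAddCommGroup E] {f : ℝ → E} {a b p : ℝ}
    (hf : ContinuousOn f (Icc a b)) (hp : p ∈ Icc a b) : ‖f p‖ ≤ ⨆ q : Icc a b, ‖f q‖ := by
  have h := (isCompact_Icc.image_of_continuousOn hf.norm).bddAbove
  rw [image_eq_range] at h
  exact le_ciSup h ⟨p, hp⟩

lemma ciInf_le_of_continuousOn {g : ℝ → ℝ} {a b p : ℝ} (hg : ContinuousOn g (Icc a b))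
    (hp : p ∈ Icc a b) : ⨅ q : Icc a b, g q ≤ g p := by
  have h := (isCompact_Icc.image_of_continuousOn hg).bddBelow
  rw [image_eq_range] at h
  exact ciInf_le h ⟨p, hp⟩

lemma ciInf_pos_of_continuousOn {g : ℝ → ℝ} {a b : ℝ} (hab : a ≤ b)
    (hg : ContinuousOn g (Icc a b)) (hpos : ∀ p ∈ Icc a b, 0 < g p) :
    0 < ⨅ q : Icc a b, g q := by
  have : Nonempty (Icc a b) := ⟨⟨a, left_mem_Icc.2 hab⟩⟩
  obtain ⟨q, hq, hmin⟩ := isCompact_Icc.exists_isMinOn (nonempty_Icc.2 hab) hg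
  exact (hpos q hq).trans_le (le_ciInf fun i => hmin i.2)

theorem stmt_9_general (ρ μ a b p₁ p₂ p₀ : ℝ) (hρ : 1 < ρ) (hμ : μ ∈ Set.Ioc (0:ℝ) 1)
    (hI : Set.Icc p₁ p₂ ⊆ Set.Ioo a b) (hp : p₁ < p₂) (hp₀ : p₀ ∈ Set.Ioo a b \ Set.Icc p₁ p₂)
    (ψ ψt : ℝ → ℝ)
    (hψ1 : ContDiffOn ℝ 1 ψ (Set.Ioo a b))
    (hψ2 : ContDiffOn ℝ 2 ψ (Set.Ioo a b \ {p₀}))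
    (hfact : ∀ p ∈ Set.Ioo a b, deriv ψ p = |p - p₀| ^ (ρ - 1) * ψt p)
    (hψtc : ContinuousOn (fun p => |ψt p|) (Set.Ioo a b))
    (hψt0 : ∀ p ∈ Set.Ioo a b, ψt p ≠ 0)
    (hmono : MonotoneOn (deriv ψ) (Set.Icc p₁ p₂) ∨
      AntitoneOn (deriv ψ) (Set.Icc p₁ p₂))
    (U ut : ℝ → ℂ)
    (hU : ∀ p ∈ Set.Ioc p₁ p₂, U p = ((p - p₁) ^ (μ - 1) : ℝ) * ut p)
    (hutc : ContinuousOn ut (Set.Icc p₁ p₂))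
    (hutd : ∀ p ∈ Set.Ioo p₁ p₂, DifferentiableAt ℝ ut p)
    (hutint : IntervalIntegrable (deriv ut) volume p₁ p₂) :
    ∀ ω : ℝ, 0 < ω →
      ‖∫ p in p₁..p₂, U p * Complex.exp (Complex.I * ω * ψ p)‖ ≤
        ((2 / μ) * (⨆ p : Set.Icc p₁ p₂, ‖ut p‖) +
          (4 * (⨆ p : Set.Icc p₁ p₂, ‖ut p‖) +
            ∫ p in p₁..p₂, ‖deriv ut p‖) *
          (⨅ p : Set.Icc p₁ p₂, |ψt p|)⁻¹) * ω ^ (-(μ / ρ)) := by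
  intro ω hω
  have hψtc' := hψtc.mono hI
  have h := norm_integral_singular_mul_cexp_le_of_mul_rpow_eq_one (δ := ω ^ (-(1 / ρ)))
    hρ hμ.1 hμ.2 hI hp.le hp₀.2 hψ1 hψ2 hfact hmono
    (fun p hp => ciInf_le_of_continuousOn (g := fun p => |ψt p|) hψtc' hp)
    (ciInf_pos_of_continuousOn (g := fun p => |ψt p|) hp.le hψtc'
      fun p hp => abs_pos.2 (hψt0 p (hI hp)))
    hU hutc hutd hutint (fun p hp => norm_le_ciSup_of_continuousOn hutc hp) (by positivity) hω
    (by rw [← Real.rpow_mul hω.le, show -(1 / ρ) * ρ = -1 by field_simp, Real.rpow_neg_one,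
      mul_inv_cancel₀ hω.ne'])
  rwa [← Real.rpow_mul hω.le, show -(1 / ρ) * μ = -(μ / ρ) by ring] at h

/-- Extension of the van der Corput Lemma: phase with a stationary point `p₀`
of order `ρ - 1` (anywhere in the open interval `I = (a,b) ⊇ [p₁,p₂]`) and
amplitude with an integrable singular point of strength `μ - 1` at `p₁`. -/
theorem stmt_9 (ρ μ a b p₁ p₂ p₀ : ℝ) (hρ : 1 < ρ) (hμ : μ ∈ Set.Ioc (0:ℝ) 1)
    (hI : Set.Icc p₁ p₂ ⊆ Set.Ioo a b) (hp : p₁ < p₂) (hp₀ : p₀ ∈ Set.Ioo a b \ Set.Icc p₁ p₂)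
    (ψ ψt : ℝ → ℝ)
    (hψ1 : ContDiffOn ℝ 1 ψ (Set.Ioo a b))
    (hψ2 : ContDiffOn ℝ 2 ψ (Set.Ioo a b \ {p₀}))
    (hfact : ∀ p ∈ Set.Ioo a b, deriv ψ p = |p - p₀| ^ (ρ - 1) * ψt p)
    (hψtc : ContinuousOn (fun p => |ψt p|) (Set.Ioo a b))
    (hψt0 : ∀ p ∈ Set.Ioo a b, ψt p ≠ 0)
    (hmono : MonotoneOn (deriv ψ) (Set.Icc p₁ p₂) ∨
      AntitoneOn (deriv ψ) (Set.Icc p₁ p₂))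
    (U ut : ℝ → ℂ)
    (hU : ∀ p ∈ Set.Ioc p₁ p₂, U p = ((p - p₁) ^ (μ - 1) : ℝ) * ut p)
    (hutc : ContinuousOn ut (Set.Icc p₁ p₂))
    (hutd : ∀ p ∈ Set.Ioo p₁ p₂, DifferentiableAt ℝ ut p)
    (hutint : IntervalIntegrable (deriv ut) volume p₁ p₂)
    (hut0 : μ ≠ 1 → ut p₁ ≠ 0) :
    ∀ ω : ℝ, 0 < ω →
      ‖∫ p in p₁..p₂, U p * Complex.exp (Complex.I * ω * ψ p)‖ ≤
        ((2 / μ) * (⨆ p : Set.Icc p₁ p₂, ‖ut p‖) +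
          (4 * (⨆ p : Set.Icc p₁ p₂, ‖ut p‖) +
            ∫ p in p₁..p₂, ‖deriv ut p‖) *
          (⨅ p : Set.Icc p₁ p₂, |ψt p|)⁻¹) * ω ^ (-(μ / ρ)) :=
  stmt_9_general ρ μ a b p₁ p₂ p₀ hρ hμ hI hp hp₀ ψ ψt hψ1 hψ2 hfact hψtc hψt0 hmono U ut hU hutc
    hutd hutint
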